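/- Let d ≥ 1 be an integer, C > 0, and let f, g ∈ 𝒮(ℝ^d) satisfy −Δf(x) + C|x|² f(x) = g(x) for all x ∈ ℝ^d. Then f is radial if and only if g is radial. -/

import Mathlib

open MeasureTheory

/-- A complex-valued function on `ℝ^d` is radial if it is invariant under all
orthogonal (i.e. linear isometric) transformations of `ℝ^d`. -/
def IsRadial {d : ℕ} (f : EuclideanSpace ℝ (Fin d) → ℂ) : Prop :=
  ∀ (U : EuclideanSpace ℝ (Fin d) ≃ₗᵢ[ℝ] EuclideanSpace ℝ (Fin d))
    (x : EuclideanSpace ℝ (Fin d)), f (U x) = f x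

/-- Partial derivative in the `j`-th coordinate direction of a complex-valued function. -/
noncomputable def pderivC {d : ℕ} (j : Fin d) (f : EuclideanSpace ℝ (Fin d) → ℂ) :
    EuclideanSpace ℝ (Fin d) → ℂ :=
  fun x => fderiv ℝ f x (EuclideanSpace.single j 1)

/-!
The Laplacian commutes with orthogonal maps, so for orthogonal `U` the difference
`h = f ∘ U - f` satisfies `Δh = C‖x‖²h` once `g` is radial. Pairing with `h` and integrating
by parts gives `C ∫ ‖x‖² ‖h x‖² = -∑ᵢ ∫ ‖∂ᵢh‖² ≤ 0`, so `h` vanishes away from the origin,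
and at the origin `f (U 0) = f 0` trivially. The converse direction is the rotation invariance
of both sides of the equation.
-/

open SchwartzMap LineDeriv Laplacian RealInnerProductSpace

namespace SchwartzMap

variable {E F : Type*} [NormedAddCommGroup E] [InnerProductSpace ℝ E] [FiniteDimensional ℝ E]

theorem laplacian_comp_linearIsometryEquiv [NormedAddCommGroup F] [NormedSpace ℝ F]
    (U : E ≃ₗᵢ[ℝ] E) (f : 𝓢(E, F)) :
    Δ (compCLMOfContinuousLinearEquiv ℝ U.toContinuousLinearEquiv f) =
      compCLMOfContinuousLinearEquiv ℝ U.toContinuousLinearEquiv (Δ f) := by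
  let b := stdOrthonormalBasis ℝ E
  rw [laplacian_eq_sum b, laplacian_eq_sum (b.map U)]
  simp [lineDerivOp_compCLMOfContinuousLinearEquiv]

variable [NormedAddCommGroup F] [InnerProductSpace ℝ F]

section

variable [MeasurableSpace E] [BorelSpace E] {μ : Measure E} [μ.IsAddHaarMeasure]

theorem integral_inner_self_laplacian {ι : Type*} [Fintype ι] (b : OrthonormalBasis ι ℝ E)
    (h : 𝓢(E, F)) :
    ∫ x, ⟪h x, Δ h x⟫ ∂μ = -∑ i, ∫ x, ‖∂_{b i} h x‖ ^ 2 ∂μ := by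
  simp_rw [laplacian_eq_sum b, sum_apply, inner_sum]
  rw [integral_finsetSum (f := fun i x ↦ ⟪h x, ∂_{b i} (∂_{b i} h) x⟫) _ fun i _ ↦
      (pairing (innerSL ℝ) h (∂_{b i} (∂_{b i} h))).integrable,
    ← Finset.sum_neg_distrib]
  refine Finset.sum_congr rfl fun i _ ↦ ?_
  simp_rw [← real_inner_self_eq_norm_sq]
  exact integral_bilinear_lineDerivOp_right_eq_neg_left h (∂_{b i} h) (innerSL ℝ) (b i)

theorem integral_inner_self_laplacian_nonpos (h : 𝓢(E, F)) : ∫ x, ⟪h x, Δ h x⟫ ∂μ ≤ 0 := by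
  rw [integral_inner_self_laplacian (stdOrthonormalBasis ℝ E), neg_nonpos]
  exact Finset.sum_nonneg fun i _ ↦ integral_nonneg fun x ↦ by positivity

end

theorem apply_eq_zero_of_laplacian_eq_smul {C : ℝ} (hC : 0 < C) (h : 𝓢(E, F))
    (hh : ∀ x, Δ h x = (C * ‖x‖ ^ 2) • h x) {x : E} (hx : x ≠ 0) : h x = 0 := by
  borelize E
  let φ : E → ℝ := fun y ↦ C * ‖y‖ ^ 2 * ‖h y‖ ^ 2
  have hφ : φ = fun y ↦ ⟪h y, Δ h y⟫ := by
    ext y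
    rw [hh, inner_smul_right, real_inner_self_eq_norm_sq]
  have hφ_nonneg : 0 ≤ φ := fun y ↦ by positivity
  have hφ_int : Integrable φ (Measure.addHaar : Measure E) := by
    rw [hφ]
    exact (pairing (innerSL ℝ) h (Δ h)).integrable
  have hφ_zero : φ = 0 := by
    refine (Continuous.ae_eq_iff_eq Measure.addHaar (by fun_prop) continuous_const).mp ?_
    refine (integral_eq_zero_iff_of_nonneg hφ_nonneg hφ_int).mp (le_antisymm ?_ ?_)
    · rw [hφ]
      exact integral_inner_self_laplacian_nonpos h
    · exact integral_nonneg hφ_nonneg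
  have := congrFun hφ_zero x
  simp only [φ, Pi.zero_apply, mul_eq_zero, pow_eq_zero_iff two_ne_zero, norm_eq_zero] at this
  exact this.resolve_left (by simp [hC.ne', hx])

end SchwartzMap

theorem sum_pderivC_pderivC_eq_laplacian {d : ℕ} (f : 𝓢(EuclideanSpace ℝ (Fin d), ℂ))
    (x : EuclideanSpace ℝ (Fin d)) :
    ∑ j, pderivC j (pderivC j f) x = Δ f x := by
  rw [laplacian_eq_sum (EuclideanSpace.basisFun (Fin d) ℝ)]
  simp only [sum_apply, EuclideanSpace.basisFun_apply]
  rfl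

theorem stmt5 (d : ℕ) (C : ℝ) (hC : 0 < C)
    (f g : SchwartzMap (EuclideanSpace ℝ (Fin d)) ℂ)
    (hfg : ∀ x : EuclideanSpace ℝ (Fin d),
      -(∑ j : Fin d, pderivC j (pderivC j (f : EuclideanSpace ℝ (Fin d) → ℂ)) x)
        + (C : ℂ) * (‖x‖^2 : ℝ) * f x = g x) :
    IsRadial (f : EuclideanSpace ℝ (Fin d) → ℂ) ↔ IsRadial (g : EuclideanSpace ℝ (Fin d) → ℂ) := by
  have hΔ : ∀ x, Δ f x = (C * ‖x‖ ^ 2) • f x - g x := fun x ↦ by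
    rw [← hfg x, sum_pderivC_pderivC_eq_laplacian, Complex.real_smul]
    push_cast
    ring
  let fU := fun U : EuclideanSpace ℝ (Fin d) ≃ₗᵢ[ℝ] EuclideanSpace ℝ (Fin d) ↦
    compCLMOfContinuousLinearEquiv ℝ U.toContinuousLinearEquiv f
  have hfU_apply : ∀ U x, fU U x = f (U x) := fun _ _ ↦ rfl
  have hΔU : ∀ U x, Δ (fU U) x = (C * ‖x‖ ^ 2) • f (U x) - g (U x) := fun U x ↦ by
    rw [laplacian_comp_linearIsometryEquiv, ← U.norm_map x]
    exact hΔ (U x)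
  constructor
  · intro hf U x
    have hfU : fU U = f := SchwartzMap.ext (hf U)
    have := hΔU U x
    rwa [hfU, hΔ, hf U x, sub_right_inj, eq_comm] at this
  · intro hg U x
    rcases eq_or_ne x 0 with rfl | hx
    · rw [map_zero]
    refine sub_eq_zero.mp (apply_eq_zero_of_laplacian_eq_smul hC (fU U - f) (fun y ↦ ?_) hx)
    rw [← laplacianCLM_eq', map_sub, laplacianCLM_eq', laplacianCLM_eq', sub_apply, sub_apply,
      hΔU, hΔ, hg U y, hfU_apply, smul_sub]
    abel
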